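/- Let D be a rich domain all of whose preferences are top-separable, and let f : D^n → A (n ≥ 2) be a strategy-proof unanimous rule satisfying the tops-only property. For any voter i, preferences P_i, P_i' ∈ D, profile P_{-i} ∈ D^{n-1} and component t ∈ M, if the tops of P_i and P_i' have the same t-th component, then f(P_i, P_{-i}) and f(P_i', P_{-i}) have the same t-th component. -/

import Mathlib

noncomputable section

universe u

/-- A (strict) preference: a complete, antisymmetric, transitive binary relation,
i.e. a strict linear order, on `α`.  `rel a b` reads "`a` is strictly preferred to `b`". -/
structure Pref (α : Type u) : Type u where
  rel : α → α → Prop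
  asymm : ∀ a b, rel a b → ¬ rel b a
  trans : ∀ a b c, rel a b → rel b c → rel a c
  total : ∀ a b, a ≠ b → rel a b ∨ rel b a

namespace Pref

variable {α : Type u}

theorem exists_top [Finite α] [Nonempty α] (P : Pref α) :
    ∃ a : α, ∀ b, b ≠ a → P.rel a b := by
  haveI : IsTrans α P.rel := ⟨P.trans⟩
  haveI : IsIrrefl α P.rel := ⟨fun a h => P.asymm a a h h⟩
  obtain ⟨a, -, ha⟩ :=
    (Finite.wellFounded_of_trans_of_irrefl P.rel).has_min Set.univ
      ⟨Classical.arbitrary α, trivial⟩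
  refine ⟨a, fun b hb => ?_⟩
  rcases P.total a b (fun h => hb h.symm) with h | h
  · exact h
  · exact absurd h (ha b trivial)

/-- The top-ranked alternative `r₁(P)` of a preference. -/
def top [Finite α] [Nonempty α] (P : Pref α) : α := P.exists_top.choose

theorem top_spec [Finite α] [Nonempty α] (P : Pref α) :
    ∀ b, b ≠ P.top → P.rel P.top b := P.exists_top.choose_spec

/-- `rank P a = k` means that `a` is the `k`-th ranked alternative `r_k(P)`. -/
def rank (P : Pref α) (a : α) : ℕ := {b | P.rel b a}.ncard + 1

/-- The induced marginal preference `[P]^s` on component `s`: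
derived from `P` by referring to the off-`s` components of the top alternative. -/
def marg {m : ℕ} {A : Fin m → Type u} [∀ s, Fintype (A s)] [∀ s, Nonempty (A s)]
    (P : Pref (∀ s, A s)) (s : Fin m) : Pref (A s) where
  rel x y := P.rel (Function.update P.top s x) (Function.update P.top s y)
  asymm _ _ h := P.asymm _ _ h
  trans _ _ _ h₁ h₂ := P.trans _ _ _ h₁ h₂
  total x y hxy := P.total _ _ fun h => hxy (by
    have := congrFun h s
    simpa using this)

end Pref

section SocialChoice

variable {m : ℕ} {A : Fin m → Type u}

/-- `a` and `b` are similar, differing exactly in component `s`: `M(a,b) = {s}`. -/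
def SimilarAt (a b : ∀ s, A s) (s : Fin m) : Prop :=
  a s ≠ b s ∧ ∀ t, t ≠ s → a t = b t

/-- The "slice" `(A^s, x^{-s})` of alternatives agreeing with `x` off component `s`. -/
def Slice (s : Fin m) (x : ∀ t, A t) : Set (∀ t, A t) :=
  {a | ∀ t, t ≠ s → a t = x t}

variable [∀ s, Fintype (A s)] [∀ s, Nonempty (A s)]

/-- The induced marginal domain `[D]^s`. -/
def margDomain (D : Set (Pref (∀ s, A s))) (s : Fin m) : Set (Pref (A s)) :=
  (fun P => Pref.marg P s) '' D

/-- A preference is minimal-richness witnessed: every alternative is some preference's top. -/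
def MinimallyRich (D : Set (Pref (∀ s, A s))) : Prop :=
  ∀ a : ∀ s, A s, ∃ P ∈ D, Pref.top P = a

/-- A separable preference. -/
def Separable (P : Pref (∀ s, A s)) : Prop :=
  ∃ Q : ∀ s, Pref (A s), ∀ (s : Fin m) (a b : ∀ t, A t),
    SimilarAt a b s → (Q s).rel (a s) (b s) → P.rel a b

/-- A top-separable preference. -/
def TopSeparable (P : Pref (∀ s, A s)) : Prop :=
  ∀ (s : Fin m) (a b : ∀ t, A t), SimilarAt a b s → a s = Pref.top P s → P.rel a b

end SocialChoice

/-- Two preferences are complete reversals. -/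
def CompleteReversals {α : Type u} (P P' : Pref α) : Prop :=
  ∀ a b, P.rel a b ↔ P'.rel b a

section SCFProps

variable {β : Type u}

/-- Unanimity of a (marginal) social choice function on domain `E`. -/
def Unanimous [Finite β] [Nonempty β] (E : Set (Pref β)) {n : ℕ}
    (f : (Fin n → E) → β) : Prop :=
  ∀ (p : Fin n → E) (a : β), (∀ i, Pref.top (p i).1 = a) → f p = a

/-- Strategy-proofness of a (marginal) social choice function on domain `E`. -/
def StrategyProof (E : Set (Pref β)) {n : ℕ} (f : (Fin n → E) → β) : Prop :=
  ∀ (p : Fin n → E) (i : Fin n) (Q : E),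
    f p ≠ f (Function.update p i Q) →
    (p i).1.rel (f p) (f (Function.update p i Q))

/-- The tops-only property. -/
def TopsOnly [Finite β] [Nonempty β] (E : Set (Pref β)) {n : ℕ}
    (f : (Fin n → E) → β) : Prop :=
  ∀ p p' : Fin n → E, (∀ i, Pref.top (p i).1 = Pref.top (p' i).1) → f p = f p'

end SCFProps

section Decomp

variable {m : ℕ} {A : Fin m → Type u} [∀ s, Fintype (A s)] [∀ s, Nonempty (A s)]

/-- The profile of induced marginal preferences `([P₁]^s, …, [Pₙ]^s)`. -/
def margProfile (D : Set (Pref (∀ s, A s))) (s : Fin m) {n : ℕ}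
    (p : Fin n → D) : Fin n → (margDomain D s) :=
  fun i => ⟨Pref.marg (p i).1 s, ⟨(p i).1, (p i).2, rfl⟩⟩

/-- `f` is decomposed by the family of marginal SCFs `g`. -/
def Decomposable (D : Set (Pref (∀ s, A s))) {n : ℕ}
    (f : (Fin n → D) → (∀ s, A s))
    (g : ∀ s : Fin m, (Fin n → (margDomain D s)) → A s) : Prop :=
  ∀ p : Fin n → D, ∀ s, f p s = g s (margProfile D s p)

/-- A decomposable domain: for every `n ≥ 2` and every SCF, being a strategy-proof
unanimous rule is equivalent to being decomposable into strategy-proof unanimous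
marginal rules. -/
def DecomposableDomain (D : Set (Pref (∀ s, A s))) : Prop :=
  ∀ n : ℕ, 2 ≤ n → ∀ f : (Fin n → D) → (∀ s, A s),
    (Unanimous D f ∧ StrategyProof D f) ↔
      ∃ g : ∀ s : Fin m, (Fin n → (margDomain D s)) → A s,
        Decomposable D f g ∧
        ∀ s, Unanimous (margDomain D s) (g s) ∧ StrategyProof (margDomain D s) (g s)

/-- Diversity⁺: `D` contains two separable preferences that are complete reversals. -/
def DiversityPlus (D : Set (Pref (∀ s, A s))) : Prop :=
  ∃ P ∈ D, ∃ P' ∈ D, Separable P ∧ Separable P' ∧ CompleteReversals P P'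

end Decomp

/-- Adjacency of two preferences: they coincide except that two alternatives ranked
consecutively in `P` occupy the same two positions in reversed order in `P'`. -/
def Adjacent {β : Type u} (P P' : Pref β) : Prop :=
  ∃ a b : β, a ≠ b ∧
    P.rank b = P.rank a + 1 ∧ P'.rank b = P.rank a ∧ P'.rank a = P.rank a + 1 ∧
    ∀ c, c ≠ a → c ≠ b → P.rank c = P'.rank c

section AdjPlus

variable {m : ℕ} {A : Fin m → Type u} [∀ s, Fintype (A s)] [∀ s, Nonempty (A s)]

/-- Adjacency⁺ of two (separable) preferences. -/
def AdjacentPlus (P P' : Pref (∀ s, A s)) : Prop :=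
  Separable P ∧ Separable P' ∧
  ∃ (s : Fin m) (a b : A s), a ≠ b ∧
    (∀ z : ∀ t, A t,
      P.rank (Function.update z s b) = P.rank (Function.update z s a) + 1 ∧
      P'.rank (Function.update z s b) = P.rank (Function.update z s a) ∧
      P'.rank (Function.update z s a) = P.rank (Function.update z s a) + 1) ∧
    ∀ c : ∀ t, A t, c s ≠ a → c s ≠ b → P.rank c = P'.rank c

/-- Edges of the graph `G_{~/~⁺}`: adjacency or adjacency⁺. -/
def AdjEdge (P P' : Pref (∀ s, A s)) : Prop :=
  Adjacent P P' ∨ AdjacentPlus P P'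

end AdjPlus

/-- A path in a graph with edge relation `edge` and vertex set `S`, connecting `x` to `y`. -/
def IsPath {β : Type u} (edge : β → β → Prop) (S : Set β) (x y : β)
    (l : List β) : Prop :=
  2 ≤ l.length ∧ l.Nodup ∧ l.head? = some x ∧ l.getLast? = some y ∧
    (∀ z ∈ l, z ∈ S) ∧ List.Chain' edge l

/-- A path of preferences has `{a,b}`-restoration if the relative ranking of `a` and `b`
flips more than once along the path. -/
def HasRestoration {β : Type u} (l : List (Pref β)) (a b : β) : Prop :=
  ∃ o p q : Fin l.length, o < p ∧ p < q ∧
    (((l.get o).rel a b ∧ (l.get p).rel b a ∧ (l.get q).rel a b) ∨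
     ((l.get o).rel b a ∧ (l.get p).rel a b ∧ (l.get q).rel b a))

section RichDom

variable {m : ℕ} {A : Fin m → Type u} [∀ s, Fintype (A s)] [∀ s, Nonempty (A s)]

/-- The Interior⁺ property. -/
def InteriorPlus (D : Set (Pref (∀ s, A s))) : Prop :=
  ∀ P ∈ D, ∀ P' ∈ D, P ≠ P' → Pref.top P = Pref.top P' →
    ∃ l : List (Pref (∀ s, A s)),
      IsPath AdjEdge D P P' l ∧ ∀ Q ∈ l, Pref.top Q = Pref.top P

/-- The Exterior⁺ property (including the no-detour condition). -/
def ExteriorPlus (D : Set (Pref (∀ s, A s))) : Prop :=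
  ∀ P ∈ D, ∀ P' ∈ D, Pref.top P ≠ Pref.top P' →
    (∀ a b : ∀ s, A s, ∃ l : List (Pref (∀ s, A s)),
        IsPath AdjEdge D P P' l ∧ ¬ HasRestoration l a b) ∧
    ∀ s : Fin m, SimilarAt (Pref.top P) (Pref.top P') s →
      ∃ l : List (Pref (∀ s, A s)),
        IsPath AdjEdge D P P' l ∧ ∀ Q ∈ l, ∀ t, t ≠ s → Pref.top Q t = Pref.top P t

/-- A rich domain: minimally rich, diversity⁺, Interior⁺ and Exterior⁺. -/
def RichDomain (D : Set (Pref (∀ s, A s))) : Prop :=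
  MinimallyRich D ∧ DiversityPlus D ∧ InteriorPlus D ∧ ExteriorPlus D

end RichDom

/-- The weak interval `⟨x,y⟩` w.r.t. a linear order. -/
def wInterval {β : Type u} (lin : LinearOrder β) (x y : β) : Set β :=
  {z | (lin.le x z ∧ lin.le z y) ∨ (lin.le y z ∧ lin.le z x)}

/-- The strict (open) interval `Int⟨x,y⟩` w.r.t. a linear order. -/
def sInterval {β : Type u} (lin : LinearOrder β) (x y : β) : Set β :=
  {z | (lin.lt x z ∧ lin.lt z y) ∨ (lin.lt y z ∧ lin.lt z x)}

/-- `x` and `y` are marginal thresholds w.r.t. `lin`. -/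
def MarginalThresholds {β : Type u} (lin : LinearOrder β) (x y : β) : Prop :=
  x = y ∨ (x ≠ y ∧ 3 ≤ (wInterval lin x y).ncard)

/-- `x` and `y` are strongly connected in the marginal domain `E`: `x ≈ y`. -/
def StronglyConnected {β : Type u} (E : Set (Pref β)) (x y : β) : Prop :=
  ∃ Q ∈ E, ∃ Q' ∈ E,
    Pref.rank Q x = 1 ∧ Pref.rank Q y = 2 ∧ Pref.rank Q' y = 1 ∧ Pref.rank Q' x = 2 ∧
    ∀ z, z ≠ x → z ≠ y → Pref.rank Q z = Pref.rank Q' z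

/-- Edges of the graph `G_≈`. -/
def scEdge {β : Type u} (E : Set (Pref β)) (x y : β) : Prop :=
  x ≠ y ∧ StronglyConnected E x y

/-- The graph with edge relation `edge` on vertex set `B` is connected. -/
def GraphConnectedOn {β : Type u} (edge : β → β → Prop) (B : Set β) : Prop :=
  ∀ x ∈ B, ∀ y ∈ B, x ≠ y → ∃ l : List β, IsPath edge B x y l

/-- `v` is a leaf of the graph with edge relation `edge` on vertex set `B`:
it has a unique neighbor. -/
def IsLeaf {β : Type u} (edge : β → β → Prop) (B : Set β) (v : β) : Prop :=
  v ∈ B ∧ ∃! w, w ∈ B ∧ edge v w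

/-- A hybrid marginal preference on `lin` w.r.t. marginal thresholds `ylo`, `yhi`. -/
def HybridPref {β : Type u} [Finite β] [Nonempty β] (lin : LinearOrder β)
    (ylo yhi : β) (Q : Pref β) : Prop :=
  ∀ a b : β, a ≠ b → a ∈ sInterval lin (Pref.top Q) b →
    a ∉ sInterval lin ylo yhi → Q.rel a b

section MDH

variable {m : ℕ} {A : Fin m → Type u} [∀ s, Fintype (A s)] [∀ s, Nonempty (A s)]

/-- `xlo` and `xhi` are thresholds: marginal thresholds on every component. -/
def Thresholds (prec : ∀ s, LinearOrder (A s)) (xlo xhi : ∀ s, A s) : Prop :=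
  ∀ s, MarginalThresholds (prec s) (xlo s) (xhi s)

/-- A multidimensional hybrid preference on `≺ = ∏ prec s` w.r.t. thresholds `xlo`, `xhi`. -/
def MDHybrid (prec : ∀ s, LinearOrder (A s)) (xlo xhi : ∀ s, A s)
    (P : Pref (∀ s, A s)) : Prop :=
  ∀ (s : Fin m) (a b : ∀ t, A t), SimilarAt a b s →
    (a s = Pref.top P s → P.rel a b) ∧
    (a s ∈ sInterval (prec s) (Pref.top P s) (b s) →
      a s ∉ sInterval (prec s) (xlo s) (xhi s) → P.rel a b)

/-- A multidimensional single-peaked preference on `≺ = ∏ prec s`. -/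
def MSP (prec : ∀ s, LinearOrder (A s)) (P : Pref (∀ s, A s)) : Prop :=
  ∀ (s : Fin m) (a b : ∀ t, A t), SimilarAt a b s →
    a s ∈ wInterval (prec s) (Pref.top P s) (b s) → P.rel a b

/-- A multidimensional hybrid domain on `≺` w.r.t. thresholds `xlo`, `xhi`. -/
def MDHybridDomain (D : Set (Pref (∀ s, A s))) (prec : ∀ s, LinearOrder (A s))
    (xlo xhi : ∀ s, A s) : Prop :=
  Thresholds prec xlo xhi ∧
  (∀ P ∈ D, MDHybrid prec xlo xhi P) ∧
  ∀ s, GraphConnectedOn (scEdge (margDomain D s)) Set.univ ∧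
    (xlo s ≠ xhi s →
      ∀ v, ¬ IsLeaf (scEdge (margDomain D s)) (wInterval (prec s) (xlo s) (xhi s)) v)

/-- Strong connectedness⁺ of two alternatives: `a ≈⁺ b`. -/
def SCPlus (D : Set (Pref (∀ s, A s))) (a b : ∀ s, A s) : Prop :=
  ∃ P ∈ D, ∃ P' ∈ D, Pref.top P = a ∧ Pref.top P' = b ∧ AdjacentPlus P P'

end MDH

/-- The outcome of the fixed-ballot formula
`max_{J ⊆ N} ( min_{i ∈ J} ( r₁(Qᵢ), b_J ) )`. -/
def fbrValue {β : Type u} (lin : LinearOrder β) {n : ℕ} [Fintype β]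
    (bal : Finset (Fin n) → β) (tops : Fin n → β) : β :=
  letI := lin
  letI : DecidableEq β := lin.toDecidableEq
  Finset.univ.sup' ⟨∅, Finset.mem_univ _⟩
    fun J : Finset (Fin n) =>
      (insert (bal J) (J.image tops)).inf' (Finset.insert_nonempty _ _) id

/-- Fixed ballots: ballot unanimity and monotonicity. -/
def FBRBallots {β : Type u} [Fintype β] [Nonempty β] (lin : LinearOrder β) {n : ℕ}
    (bal : Finset (Fin n) → β) : Prop :=
  bal ∅ = @Finset.min' β lin Finset.univ Finset.univ_nonempty ∧
  bal Finset.univ = @Finset.max' β lin Finset.univ Finset.univ_nonempty ∧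
  ∀ J J' : Finset (Fin n), J ⊂ J' → lin.le (bal J) (bal J')

/-- A fixed ballot rule (FBR) on the linear order `lin`. -/
def IsFBR {β : Type u} [Fintype β] [Nonempty β] (lin : LinearOrder β)
    (E : Set (Pref β)) {n : ℕ} (f : (Fin n → E) → β) : Prop :=
  ∃ bal : Finset (Fin n) → β, FBRBallots lin bal ∧
    ∀ p : Fin n → E, f p = fbrValue lin bal fun i => Pref.top (p i).1

/-- An `(xlo, xhi)`-FBR: an FBR that additionally satisfies the
constrained-dictatorship condition. -/
def IsConstrainedFBR {β : Type u} [Fintype β] [Nonempty β] (lin : LinearOrder β)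
    (xlo xhi : β) (E : Set (Pref β)) {n : ℕ} (f : (Fin n → E) → β) : Prop :=
  ∃ bal : Finset (Fin n) → β, FBRBallots lin bal ∧
    (∀ p : Fin n → E, f p = fbrValue lin bal fun i => Pref.top (p i).1) ∧
    ∃ i : Fin n, ∀ J : Finset (Fin n),
      (i ∈ J → lin.le xhi (bal J)) ∧ (i ∉ J → lin.le (bal J) xlo)

/-!
Fix the other voters and regard the outcome as a function `φ` of voter `i`'s preference; it
inherits the tops-only property and strategy-proofness. Across an edge `P — P'` of `G_{~/~⁺}`
with different tops and different outcomes, strategy-proofness forces both the pair of tops and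
the pair of outcomes to be reversed between `P` and `P'`. An adjacency reverses a single pair,
and an adjacency⁺ reverses only pairs similar at one common component, so the outcomes then
differ only where the tops do. Hence along a no-detour path (Exterior⁺) whose tops vary only in
a component `s ≠ t`, the `t`-th component of the outcome is constant. By minimal richness the
top can be moved to any alternative with the same `t`-th component one component at a time.
-/

open Function

namespace Pref

variable {α : Type u} [Finite α]

theorem rank_lt_rank_of_rel (P : Pref α) {a b : α} (h : P.rel a b) : P.rank a < P.rank b := by
  have hsub : {c | P.rel c a} ⊂ {c | P.rel c b} := by
    refine Set.ssubset_iff_subset_ne.mpr ⟨fun c hc => P.trans _ _ _ hc h, fun heq => ?_⟩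
    have haa : a ∈ {c | P.rel c a} := heq ▸ h
    exact P.asymm a a haa haa
  simpa [rank] using Set.ncard_lt_ncard hsub

theorem rank_injective (P : Pref α) : Injective P.rank := by
  intro a b h
  by_contra hne
  rcases P.total a b hne with hr | hr
  · exact (P.rank_lt_rank_of_rel hr).ne h
  · exact (P.rank_lt_rank_of_rel hr).ne h.symm

theorem flip_of_rank_shift {P P' : Pref α} {u v : α → Prop}
    (hshift : ∀ c, (u c ∧ P'.rank c = P.rank c + 1) ∨ (v c ∧ P'.rank c + 1 = P.rank c) ∨
      P'.rank c = P.rank c)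
    {x y : α} (hxy : P.rel x y) (hyx : P'.rel y x) :
    u x ∧ v y ∧ P.rank y = P.rank x + 1 := by
  have hx := P.rank_lt_rank_of_rel hxy
  have hy := P'.rank_lt_rank_of_rel hyx
  rcases hshift x with ⟨hux, _⟩ | ⟨-, _⟩ | _ <;>
    rcases hshift y with ⟨-, _⟩ | ⟨hvy, _⟩ | _ <;>
    first | exact ⟨hux, hvy, by omega⟩ | omega

end Pref

theorem Adjacent.eq_of_flip {β : Type u} [Finite β] {P P' : Pref β} (h : Adjacent P P') :
    ∃ a b : β, ∀ x y, P.rel x y → P'.rel y x → x = a ∧ y = b := by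
  obtain ⟨a, b, -, hPb, hP'b, hP'a, hrest⟩ := h
  have hshift (c : β) : (c = a ∧ P'.rank c = P.rank c + 1) ∨
      (c = b ∧ P'.rank c + 1 = P.rank c) ∨ P'.rank c = P.rank c := by
    by_cases hca : c = a
    · exact .inl ⟨hca, hca ▸ hP'a⟩
    by_cases hcb : c = b
    · exact .inr (.inl ⟨hcb, by subst hcb; omega⟩)
    exact .inr (.inr (hrest c hca hcb).symm)
  exact ⟨a, b, fun x y hxy hyx => (Pref.flip_of_rank_shift hshift hxy hyx).imp_right And.left⟩

section Product

variable {m : ℕ} {A : Fin m → Type u}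

theorem SimilarAt.unique {a b : ∀ s, A s} {s s' : Fin m} (h : SimilarAt a b s)
    (h' : SimilarAt a b s') : s = s' := by
  by_contra hne
  exact h'.1 (h.2 s' (Ne.symm hne))

theorem similarAt_of_ne_of_eq_off {a b : ∀ s, A s} {s : Fin m} (hne : a ≠ b)
    (hoff : ∀ r, r ≠ s → a r = b r) : SimilarAt a b s := by
  refine ⟨fun hs => hne (funext fun r => ?_), hoff⟩
  by_cases hr : r = s
  · exact hr ▸ hs
  · exact hoff r hr

variable [∀ s, Fintype (A s)]

theorem AdjacentPlus.exists_similarAt_of_flip {P P' : Pref (∀ s, A s)}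
    (h : AdjacentPlus P P') : ∃ s, ∀ x y, P.rel x y → P'.rel y x → SimilarAt x y s := by
  obtain ⟨-, -, s, a, b, hab, hswap, hrest⟩ := h
  have hshift (c : ∀ r, A r) : (c s = a ∧ P'.rank c = P.rank c + 1) ∨
      (c s = b ∧ P'.rank c + 1 = P.rank c) ∨ P'.rank c = P.rank c := by
    by_cases hca : c s = a
    · have := (hswap c).2.2
      rw [update_eq_self_iff.mpr hca.symm] at this
      exact .inl ⟨hca, this⟩
    by_cases hcb : c s = b
    · have := hswap c
      rw [update_eq_self_iff.mpr hcb.symm] at this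
      exact .inr (.inl ⟨hcb, by omega⟩)
    exact .inr (.inr (hrest c hca hcb).symm)
  refine ⟨s, fun x y hxy hyx => ?_⟩
  obtain ⟨hxa, -, hyx1⟩ := Pref.flip_of_rank_shift hshift hxy hyx
  have hy : y = update x s b := P.rank_injective <| by
    rw [hyx1, (hswap x).1, update_eq_self_iff.mpr hxa.symm]
  subst hy
  exact ⟨by simpa [hxa] using hab, fun r hr => (update_of_ne hr b x).symm⟩

theorem AdjEdge.similarAt_of_flip {P P' : Pref (∀ s, A s)} (h : AdjEdge P P')
    {x y u v : ∀ s, A s} {s : Fin m} (hxy : P.rel x y) (hyx : P'.rel y x)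
    (hsim : SimilarAt x y s) (huv : P.rel u v) (hvu : P'.rel v u) : SimilarAt u v s := by
  rcases h with h | h
  · obtain ⟨a, b, hab⟩ := h.eq_of_flip
    obtain ⟨rfl, rfl⟩ := hab x y hxy hyx
    obtain ⟨rfl, rfl⟩ := hab u v huv hvu
    exact hsim
  · obtain ⟨s', hs'⟩ := h.exists_similarAt_of_flip
    exact hsim.unique (hs' x y hxy hyx) ▸ hs' u v huv hvu

end Product

theorem apply_eq_apply_of_forall_update_eq {ι : Type*} [Fintype ι] [DecidableEq ι]
    {β : ι → Type*} {γ : Type*} {ψ : (∀ i, β i) → γ} {t : ι}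
    (hψ : ∀ x j c, j ≠ t → ψ (update x j c) = ψ x) {x y : ∀ i, β i}
    (hxy : x t = y t) : ψ x = ψ y := by
  have hpiecewise (S : Finset ι) (ht : t ∉ S) : ψ (S.piecewise y x) = ψ x := by
    induction S using Finset.induction_on with
    | empty => simp
    | insert j S _ ih =>
      rw [Finset.piecewise_insert, hψ _ _ _ (fun hj => ht (hj ▸ Finset.mem_insert_self j S)),
        ih (fun h => ht (Finset.mem_insert_of_mem h))]
  have hy : (Finset.univ.erase t).piecewise y x = y := by
    funext i
    by_cases hi : i = t
    · subst hi
      simp [hxy]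
    · simp [hi]
  rw [← hy, hpiecewise _ (Finset.notMem_erase t _)]

theorem IsPath.induction {β : Type u} {edge : β → β → Prop} {S : Set β} {x y : β}
    {l : List β} (h : IsPath edge S x y l) (p : β → Prop)
    (carries : ∀ a ∈ l, ∀ b ∈ l, a ∈ S → b ∈ S → edge a b → p a → p b)
    (hx : p x) : p y := by
  obtain ⟨-, -, hhead, hlast, hS, hchain⟩ := h
  refine List.IsChain.induction p l (List.IsChain.iff_mem.mp hchain)
    (fun a b ⟨ha, hb, hab⟩ => carries a ha b hb (hS a ha) (hS b hb) hab) (fun hne => ?_) y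
    (List.mem_of_getLast? hlast)
  rwa [Option.some_injective _ ((List.head?_eq_some_head hne).symm.trans hhead)]

section Voter

variable {β : Type u} {E : Set (Pref β)} {n : ℕ} {f : (Fin n → E) → β}

theorem TopsOnly.apply_update [Finite β] [Nonempty β] (hto : TopsOnly E f) (p : Fin n → E)
    (i : Fin n) {Q Q' : E} (h : Pref.top Q.1 = Pref.top Q'.1) :
    f (update p i Q) = f (update p i Q') := by
  refine hto _ _ fun j => ?_
  by_cases hj : j = i
  · subst hj
    simpa using h
  · simp [hj]

theorem StrategyProof.rel_apply_update (hsp : StrategyProof E f) (p : Fin n → E) (i : Fin n)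
    {Q Q' : E} (h : f (update p i Q) ≠ f (update p i Q')) :
    Q.1.rel (f (update p i Q)) (f (update p i Q')) := by
  simpa using hsp (update p i Q) i Q' (by simpa using h)

end Voter

section Outcome

variable {m : ℕ} {A : Fin m → Type u} [∀ s, Fintype (A s)] [∀ s, Nonempty (A s)]
  {D : Set (Pref (∀ s, A s))} {φ : D → ∀ s, A s}

theorem apply_eq_of_adjEdge_of_eq_off
    (hφtop : ∀ P P' : D, Pref.top P.1 = Pref.top P'.1 → φ P = φ P')
    (hφsp : ∀ P P' : D, φ P ≠ φ P' → P.1.rel (φ P) (φ P'))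
    {P P' : D} (hadj : AdjEdge P.1 P'.1) {s t : Fin m} (hst : s ≠ t)
    (hoff : ∀ r, r ≠ s → Pref.top P.1 r = Pref.top P'.1 r) : φ P t = φ P' t := by
  by_cases htop : Pref.top P.1 = Pref.top P'.1
  · rw [hφtop P P' htop]
  by_cases hφ : φ P = φ P'
  · rw [hφ]
  have hsim := hadj.similarAt_of_flip (P.1.top_spec _ (Ne.symm htop)) (P'.1.top_spec _ htop)
    (similarAt_of_ne_of_eq_off htop hoff) (hφsp P P' hφ) (hφsp P' P (Ne.symm hφ))
  exact hsim.2 t hst.symm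

theorem ExteriorPlus.apply_eq_of_eq_off (hext : ExteriorPlus D)
    (hφtop : ∀ P P' : D, Pref.top P.1 = Pref.top P'.1 → φ P = φ P')
    (hφsp : ∀ P P' : D, φ P ≠ φ P' → P.1.rel (φ P) (φ P'))
    {s t : Fin m} (hst : s ≠ t) {P P' : D}
    (hoff : ∀ r, r ≠ s → Pref.top P.1 r = Pref.top P'.1 r) : φ P t = φ P' t := by
  by_cases htop : Pref.top P.1 = Pref.top P'.1
  · rw [hφtop P P' htop]
  obtain ⟨l, hl, hlP⟩ :=
    (hext P.1 P.2 P'.1 P'.2 htop).2 s (similarAt_of_ne_of_eq_off htop hoff)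
  suffices h : ∃ hP' : P'.1 ∈ D, φ ⟨P'.1, hP'⟩ t = φ P t from h.2.symm
  refine hl.induction (fun Q => ∃ hQ : Q ∈ D, φ ⟨Q, hQ⟩ t = φ P t)
    (fun a ha b hb _ hbD hab ⟨haD, hφa⟩ => ⟨hbD, ?_⟩) ⟨P.2, rfl⟩
  rw [← hφa]
  exact (apply_eq_of_adjEdge_of_eq_off hφtop hφsp (P := ⟨a, haD⟩) (P' := ⟨b, hbD⟩) hab hst
    fun r hr => (hlP a ha r hr).trans (hlP b hb r hr).symm).symm

theorem apply_eq_of_top_eq_at (hmr : MinimallyRich D) (hext : ExteriorPlus D)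
    (hφtop : ∀ P P' : D, Pref.top P.1 = Pref.top P'.1 → φ P = φ P')
    (hφsp : ∀ P P' : D, φ P ≠ φ P' → P.1.rel (φ P) (φ P'))
    {t : Fin m} {P P' : D} (htop : Pref.top P.1 t = Pref.top P'.1 t) : φ P t = φ P' t := by
  choose R hRD hRtop using hmr
  let ψ (x : ∀ s, A s) : A t := φ ⟨R x, hRD x⟩ t
  have hψ (Q : D) : ψ (Pref.top Q.1) = φ Q t := congrFun (hφtop _ _ (hRtop _)) t
  have hψupdate (x : ∀ s, A s) (s : Fin m) (c : A s) (hst : s ≠ t) :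
      ψ (update x s c) = ψ x :=
    hext.apply_eq_of_eq_off hφtop hφsp hst fun r hr => by simp [hRtop, update_of_ne hr]
  rw [← hψ P, ← hψ P']
  exact apply_eq_apply_of_forall_update_eq hψupdate htop

end Outcome

theorem stmt_10_general {m : ℕ} {A : Fin m → Type u}
    [∀ s, Fintype (A s)] [∀ s, Nonempty (A s)]
    (D : Set (Pref (∀ s, A s)))
    (hrich : RichDomain D)
    (n : ℕ)
    (f : (Fin n → D) → (∀ s, A s))
    (hsp : StrategyProof D f) (hto : TopsOnly D f)
    (p : Fin n → D) (i : Fin n) (Q : D) (t : Fin m)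
    (htop : Pref.top (p i).1 t = Pref.top Q.1 t) :
    f p t = f (Function.update p i Q) t := by
  obtain ⟨hmr, -, -, hext⟩ := hrich
  have h := apply_eq_of_top_eq_at hmr hext (φ := fun Q => f (update p i Q))
    (fun _ _ => hto.apply_update p i) (fun _ _ => hsp.rel_apply_update p i) htop
  simpa using h

/-- if voter `i`'s tops under `P_i` and `P_i'` share the `t`-th
component, the outcomes share the `t`-th component. -/
theorem stmt_10 {m : ℕ} (hm : 2 ≤ m) {A : Fin m → Type u}
    [∀ s, Fintype (A s)] [∀ s, Nonempty (A s)]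
    (hcard : ∀ s, 2 ≤ Fintype.card (A s))
    (D : Set (Pref (∀ s, A s)))
    (hrich : RichDomain D)
    (hts : ∀ P ∈ D, TopSeparable P)
    (n : ℕ) (hn : 2 ≤ n)
    (f : (Fin n → D) → (∀ s, A s))
    (hu : Unanimous D f) (hsp : StrategyProof D f) (hto : TopsOnly D f)
    (p : Fin n → D) (i : Fin n) (Q : D) (t : Fin m)
    (htop : Pref.top (p i).1 t = Pref.top Q.1 t) :
    f p t = f (Function.update p i Q) t :=
  stmt_10_general D hrich n f hsp hto p i Q t htop
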